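/- arXiv:2504.07403 — 4 statements merged into one kernel-verified Lean document; each statement's English description precedes it below -/
import Mathlib

section
/- Let s : U × Y → ℝ be L-Lipschitz in its first argument (|s(u1,y) − s(u2,y)| ≤ L·d(u1,u2) for all y). Suppose for each u the mechanism Q outputs y with density proportional to e^{s(u,y)} with respect to a base measure μ on Y, with finite normalizing constant. Then Q is 2L-geographic differentially private: for every measurable S and all u1,u2, P(Qu1 ∈ S) ≤ e^{2L·d(u1,u2)} P(Qu2 ∈ S). -/
open MeasureTheory ENNReal Real

/-- A mechanism outputting `y` with density proportional to `exp (s u y)`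
(w.r.t. base measure `μ`), where `s` is `L`-Lipschitz in `u`, is
`2 L`-geographic differentially private. -/
theorem exponential_density_mechanism_geoDP
    {U : Type*} [MetricSpace U] {Y : Type*} [MeasurableSpace Y]
    (μ : Measure Y) [SigmaFinite μ]
    (s : U → Y → ℝ) (L : ℝ) (hL : 0 ≤ L)
    (hLip : ∀ u₁ u₂ : U, ∀ y : Y, |s u₁ y - s u₂ y| ≤ L * dist u₁ u₂)
    (Z : U → ℝ)
    (hZ : ∀ u : U, Z u = ∫ y, Real.exp (s u y) ∂μ)
    (hZpos : ∀ u : U, 0 < Z u)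
    (hint : ∀ u : U, Integrable (fun y => Real.exp (s u y)) μ)
    (Q : U → Measure Y)
    (hQ : ∀ u : U, Q u = μ.withDensity (fun y => ENNReal.ofReal (Real.exp (s u y) / Z u))) :
    ∀ S : Set Y, MeasurableSet S → ∀ u₁ u₂ : U,
      Q u₁ S ≤ ENNReal.ofReal (Real.exp (2 * L * dist u₁ u₂)) * Q u₂ S := by
  intro S hS u₁ u₂
  set D := dist u₁ u₂ with hD
  have hD0 : 0 ≤ D := dist_nonneg
  -- pointwise bounds
  have hle1 : ∀ y, Real.exp (s u₁ y) ≤ Real.exp (L * D) * Real.exp (s u₂ y) := by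
    intro y
    rw [← Real.exp_add]
    apply Real.exp_le_exp.2
    have := (abs_le.1 (hLip u₁ u₂ y)).2
    linarith
  have hle2 : ∀ y, Real.exp (s u₂ y) ≤ Real.exp (L * D) * Real.exp (s u₁ y) := by
    intro y
    rw [← Real.exp_add]
    apply Real.exp_le_exp.2
    have := (abs_le.1 (hLip u₂ u₁ y)).2
    have hd : dist u₂ u₁ = D := by rw [hD, dist_comm]
    rw [hd] at this
    linarith
  -- Z bound : Z u₂ ≤ exp(L D) * Z u₁
  have hZle : Z u₂ ≤ Real.exp (L * D) * Z u₁ := by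
    rw [hZ u₂, hZ u₁, ← integral_const_mul]
    exact integral_mono (hint u₂) ((hint u₁).const_mul (Real.exp (L * D))) fun y => hle2 y
  -- density pointwise bound
  have hdens : ∀ y, Real.exp (s u₁ y) / Z u₁ ≤
      Real.exp (2 * L * D) * (Real.exp (s u₂ y) / Z u₂) := by
    intro y
    have h1 : 0 < Z u₁ := hZpos u₁
    have h2 : 0 < Z u₂ := hZpos u₂
    have he : (0:ℝ) < Real.exp (L * D) := Real.exp_pos _
    rw [div_le_iff₀ h1]
    have key : Real.exp (s u₁ y) * Z u₂ ≤
        Real.exp (2 * L * D) * Real.exp (s u₂ y) * Z u₁ := by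
      calc Real.exp (s u₁ y) * Z u₂
          ≤ (Real.exp (L * D) * Real.exp (s u₂ y)) * (Real.exp (L * D) * Z u₁) := by
            apply mul_le_mul (hle1 y) hZle (le_of_lt h2)
            positivity
        _ = Real.exp (2 * L * D) * Real.exp (s u₂ y) * Z u₁ := by
            rw [show (2:ℝ) * L * D = L * D + L * D by ring, Real.exp_add]; ring
    calc Real.exp (s u₁ y)
        = Real.exp (s u₁ y) * Z u₂ / Z u₂ := by field_simp
      _ ≤ Real.exp (2 * L * D) * Real.exp (s u₂ y) * Z u₁ / Z u₂ := by
          gcongr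
      _ = Real.exp (2 * L * D) * (Real.exp (s u₂ y) / Z u₂) * Z u₁ := by ring
  -- conclude
  rw [hQ u₁, hQ u₂, withDensity_apply _ hS, withDensity_apply _ hS,
    ← lintegral_const_mul' _ _ ENNReal.ofReal_ne_top]
  apply lintegral_mono
  intro y
  calc ENNReal.ofReal (Real.exp (s u₁ y) / Z u₁)
      ≤ ENNReal.ofReal (Real.exp (2 * L * D) * (Real.exp (s u₂ y) / Z u₂)) :=
        ENNReal.ofReal_le_ofReal (hdens y)
    _ = ENNReal.ofReal (Real.exp (2 * L * D)) * ENNReal.ofReal (Real.exp (s u₂ y) / Z u₂) := by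
        rw [ENNReal.ofReal_mul (le_of_lt (Real.exp_pos _))]
end

section
/- For the one-dimensional Laplace mechanism Q with scale η, the total variation distance between Q(u1) and Q(u2) satisfies TV(Q(u1), Q(u2)) = 1 − e^{−|u1−u2|/(2η)}. -/
/-!
The two densities cross at the midpoint `m` of `u₁ ≤ u₂`: the one centred at `u₁` dominates
on `(-∞, m]` and the other on `(m, ∞)`. As both have mass one, `|Q u₁ S - Q u₂ S|` is bounded by
`Q u₁ (Iic m) - Q u₂ (Iic m)` for every measurable `S`, and this value is attained. The tail
integrals of the Laplace density evaluate it to `(1 - e/2) - e/2`, where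
`e = exp (-|u₁ - u₂| / (2 η))`.
-/

open MeasureTheory ENNReal Real Set

section TotalVariation

variable {α : Type*} [MeasurableSpace α] {μ : Measure α}

theorem iSup_prop_eq_of_forall_le_of_eq {ι : Type*} {p : ι → Prop} {F : ι → ℝ} {c : ℝ}
    (hc : 0 ≤ c) (hle : ∀ i, p i → F i ≤ c) {i₀ : ι} (hp : p i₀) (hF : F i₀ = c) :
    ⨆ (i) (_ : p i), F i = c := by
  have hub : ∀ i, ⨆ (_ : p i), F i ≤ c := fun i => Real.iSup_le (hle i) hc
  refine le_antisymm (Real.iSup_le hub hc) ?_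
  calc c = ⨆ (_ : p i₀), F i₀ := by rw [ciSup_pos hp, hF]
    _ ≤ _ := le_ciSup ⟨c, forall_mem_range.2 hub⟩ i₀

theorem toReal_withDensity_ofReal_apply {f : α → ℝ} (hf : AEStronglyMeasurable f μ)
    (hf₀ : 0 ≤ f) {S : Set α} (hS : MeasurableSet S) :
    (μ.withDensity (fun x => ENNReal.ofReal (f x)) S).toReal = ∫ x in S, f x ∂μ := by
  rw [withDensity_apply _ hS, integral_eq_lintegral_of_nonneg_ae (ae_of_all _ hf₀) hf.restrict]

theorem setIntegral_le_setIntegral_of_nonneg_of_nonpos_compl {h : α → ℝ}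
    (hh : Integrable h μ) {A S : Set α} (hA : MeasurableSet A) (hS : MeasurableSet S)
    (h_nonneg : ∀ x ∈ A, 0 ≤ h x) (h_nonpos : ∀ x ∉ A, h x ≤ 0) :
    ∫ x in S, h x ∂μ ≤ ∫ x in A, h x ∂μ := by
  rw [← integral_inter_add_sdiff hA hh.integrableOn]
  have h_inter : ∫ x in S ∩ A, h x ∂μ ≤ ∫ x in A, h x ∂μ :=
    setIntegral_mono_set hh.integrableOn ((ae_restrict_iff' hA).2 (ae_of_all _ h_nonneg))
      inter_subset_right.eventuallyLE
  have h_diff : ∫ x in S \ A, h x ∂μ ≤ 0 :=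
    setIntegral_nonpos (hS.diff hA) fun x hx => h_nonpos x hx.2
  linarith

theorem iSup_abs_withDensity_sub_eq_setIntegral_sub {f g : α → ℝ}
    (hf : Integrable f μ) (hg : Integrable g μ) (hf₀ : 0 ≤ f) (hg₀ : 0 ≤ g)
    (h_mass : ∫ x, f x ∂μ = ∫ x, g x ∂μ) {A : Set α} (hA : MeasurableSet A)
    (hgf : ∀ x ∈ A, g x ≤ f x) (hfg : ∀ x ∉ A, f x ≤ g x) :
    ⨆ (S : Set α) (_ : MeasurableSet S),
        |(μ.withDensity (fun x => ENNReal.ofReal (f x)) S).toReal -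
          (μ.withDensity (fun x => ENNReal.ofReal (g x)) S).toReal|
      = ∫ x in A, f x ∂μ - ∫ x in A, g x ∂μ := by
  have h_sub_compl : ∫ x in Aᶜ, g x ∂μ - ∫ x in Aᶜ, f x ∂μ
      = ∫ x in A, f x ∂μ - ∫ x in A, g x ∂μ := by
    linarith [integral_add_compl hA hf, integral_add_compl hA hg]
  refine iSup_prop_eq_of_forall_le_of_eq ?_ (fun S hS => ?_) hA ?_
  · exact sub_nonneg.2 (setIntegral_mono_on hg.integrableOn hf.integrableOn hA hgf)
  · rw [toReal_withDensity_ofReal_apply hf.1 hf₀ hS,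
      toReal_withDensity_ofReal_apply hg.1 hg₀ hS, abs_sub_le_iff,
      ← integral_sub hf.integrableOn hg.integrableOn,
      ← integral_sub hg.integrableOn hf.integrableOn]
    constructor
    · calc ∫ x in S, (f x - g x) ∂μ ≤ ∫ x in A, (f x - g x) ∂μ :=
            setIntegral_le_setIntegral_of_nonneg_of_nonpos_compl (hf.sub hg) hA hS
              (fun x hx => sub_nonneg.2 (hgf x hx)) (fun x hx => sub_nonpos.2 (hfg x hx))
        _ = _ := integral_sub hf.integrableOn hg.integrableOn
    · calc ∫ x in S, (g x - f x) ∂μ ≤ ∫ x in Aᶜ, (g x - f x) ∂μ :=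
            setIntegral_le_setIntegral_of_nonneg_of_nonpos_compl (hg.sub hf) hA.compl hS
              (fun x hx => sub_nonneg.2 (hfg x hx))
              (fun x hx => sub_nonpos.2 (hgf x (not_not.1 hx)))
        _ = _ := by rw [integral_sub hg.integrableOn hf.integrableOn, h_sub_compl]
  · rw [toReal_withDensity_ofReal_apply hf.1 hf₀ hA,
      toReal_withDensity_ofReal_apply hg.1 hg₀ hA]
    exact abs_of_nonneg (sub_nonneg.2 (setIntegral_mono_on hg.integrableOn hf.integrableOn hA hgf))

end TotalVariation

namespace ProbabilityTheory

noncomputable def laplacePDFReal (η u y : ℝ) : ℝ := exp (-|u - y| / η) / (2 * η)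

variable {η u a : ℝ}

lemma laplacePDFReal_nonneg (hη : 0 ≤ η) (u : ℝ) : 0 ≤ laplacePDFReal η u :=
  fun _ => div_nonneg (exp_nonneg _) (by positivity)

lemma laplacePDFReal_of_le {y : ℝ} (h : y ≤ u) :
    laplacePDFReal η u y = exp (-u / η) / (2 * η) * exp (η⁻¹ * y) := by
  rw [laplacePDFReal, abs_of_nonneg (sub_nonneg.2 h), div_mul_eq_mul_div, ← exp_add]
  ring_nf

lemma laplacePDFReal_of_ge {y : ℝ} (h : u ≤ y) :
    laplacePDFReal η u y = exp (u / η) / (2 * η) * exp (-η⁻¹ * y) := by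
  rw [laplacePDFReal, abs_of_nonpos (sub_nonpos.2 h), div_mul_eq_mul_div, ← exp_add]
  ring_nf

lemma integrableOn_laplacePDFReal_Iic (hη : 0 < η) (h : a ≤ u) :
    IntegrableOn (laplacePDFReal η u) (Iic a) :=
  IntegrableOn.congr_fun ((integrableOn_exp_mul_Iic (inv_pos.2 hη) a).const_mul _)
    (fun _ hy => (laplacePDFReal_of_le (le_trans hy h)).symm) measurableSet_Iic

lemma integrableOn_laplacePDFReal_Ioi (hη : 0 < η) (h : u ≤ a) :
    IntegrableOn (laplacePDFReal η u) (Ioi a) :=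
  IntegrableOn.congr_fun
    ((integrableOn_exp_mul_Ioi (neg_lt_zero.2 (inv_pos.2 hη)) a).const_mul _)
    (fun _ hy => (laplacePDFReal_of_ge (h.trans hy.le)).symm) measurableSet_Ioi

lemma setIntegral_laplacePDFReal_Iic_of_le (hη : 0 < η) (h : a ≤ u) :
    ∫ y in Iic a, laplacePDFReal η u y = exp ((a - u) / η) / 2 := by
  rw [setIntegral_congr_fun measurableSet_Iic fun y hy => laplacePDFReal_of_le (le_trans hy h),
    integral_const_mul, integral_exp_mul_Iic (inv_pos.2 hη), div_mul_div_comm, ← exp_add]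
  field_simp
  ring_nf

lemma setIntegral_laplacePDFReal_Ioi_of_ge (hη : 0 < η) (h : u ≤ a) :
    ∫ y in Ioi a, laplacePDFReal η u y = exp ((u - a) / η) / 2 := by
  rw [setIntegral_congr_fun measurableSet_Ioi fun y hy => laplacePDFReal_of_ge (h.trans hy.le),
    integral_const_mul, integral_exp_mul_Ioi (neg_lt_zero.2 (inv_pos.2 hη)), neg_div_neg_eq,
    div_mul_div_comm, ← exp_add]
  field_simp
  ring_nf

lemma integrable_laplacePDFReal (hη : 0 < η) (u : ℝ) : Integrable (laplacePDFReal η u) := by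
  rw [← integrableOn_univ, ← Iic_union_Ioi (a := u)]
  exact (integrableOn_laplacePDFReal_Iic hη le_rfl).union
    (integrableOn_laplacePDFReal_Ioi hη le_rfl)

lemma integral_laplacePDFReal (hη : 0 < η) (u : ℝ) : ∫ y, laplacePDFReal η u y = 1 := by
  rw [← intervalIntegral.integral_Iic_add_Ioi (integrableOn_laplacePDFReal_Iic hη le_rfl)
    (integrableOn_laplacePDFReal_Ioi hη le_rfl), setIntegral_laplacePDFReal_Iic_of_le hη le_rfl,
    setIntegral_laplacePDFReal_Ioi_of_ge hη le_rfl]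
  norm_num

lemma setIntegral_laplacePDFReal_Iic_of_ge (hη : 0 < η) (h : u ≤ a) :
    ∫ y in Iic a, laplacePDFReal η u y = 1 - exp ((u - a) / η) / 2 := by
  rw [← integral_laplacePDFReal hη u, ← setIntegral_laplacePDFReal_Ioi_of_ge hη h,
    ← intervalIntegral.integral_Iic_add_Ioi (integrable_laplacePDFReal hη u).integrableOn
      (integrable_laplacePDFReal hη u).integrableOn]
  ring

lemma laplacePDFReal_le_of_abs_sub_le (hη : 0 ≤ η) {v y : ℝ} (h : |u - y| ≤ |v - y|) :
    laplacePDFReal η v y ≤ laplacePDFReal η u y := by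
  unfold laplacePDFReal
  gcongr

end ProbabilityTheory

open ProbabilityTheory

/-- The total variation distance between two one-dimensional Laplace
distributions with scale `η` centered at `u₁` and `u₂` equals
`1 - exp (-|u₁ - u₂| / (2 η))`. -/
theorem laplace_total_variation (η : ℝ) (hη : 0 < η)
    (Q : ℝ → Measure ℝ)
    (hQ : ∀ u : ℝ, Q u = volume.withDensity
      (fun y => ENNReal.ofReal (Real.exp (-|u - y| / η) / (2 * η))))
    (u₁ u₂ : ℝ) :
    (⨆ (S : Set ℝ) (_ : MeasurableSet S), |(Q u₁ S).toReal - (Q u₂ S).toReal|)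
      = 1 - Real.exp (-|u₁ - u₂| / (2 * η)) := by
  wlog h : u₁ ≤ u₂ generalizing u₁ u₂
  · simpa only [abs_sub_comm] using this u₂ u₁ (le_of_not_ge h)
  have hQ' : ∀ u, Q u = volume.withDensity fun y => ENNReal.ofReal (laplacePDFReal η u y) :=
    hQ
  set m := (u₁ + u₂) / 2 with hm
  have h_left : ∀ y ∈ Iic m, laplacePDFReal η u₂ y ≤ laplacePDFReal η u₁ y := fun y hy =>
    laplacePDFReal_le_of_abs_sub_le hη.le (abs_le_abs (by linarith) (by linarith [hy.out]))
  have h_right : ∀ y ∉ Iic m, laplacePDFReal η u₁ y ≤ laplacePDFReal η u₂ y :=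
    fun y (hy : ¬y ≤ m) => laplacePDFReal_le_of_abs_sub_le hη.le <| by
      rw [abs_sub_comm, abs_sub_comm u₁]
      exact abs_le_abs (by linarith) (by linarith [not_le.1 hy])
  have h_exponent :
      (u₁ - m) / η = -|u₁ - u₂| / (2 * η) ∧ (m - u₂) / η = -|u₁ - u₂| / (2 * η) := by
    rw [abs_of_nonpos (sub_nonpos.2 h)]
    constructor <;> field_simp <;> ring
  rw [hQ' u₁, hQ' u₂, iSup_abs_withDensity_sub_eq_setIntegral_sub
      (integrable_laplacePDFReal hη u₁) (integrable_laplacePDFReal hη u₂)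
      (laplacePDFReal_nonneg hη.le u₁) (laplacePDFReal_nonneg hη.le u₂)
      (by rw [integral_laplacePDFReal hη, integral_laplacePDFReal hη]) measurableSet_Iic
      h_left h_right,
    setIntegral_laplacePDFReal_Iic_of_ge hη (by linarith),
    setIntegral_laplacePDFReal_Iic_of_le hη (by linarith), h_exponent.1, h_exponent.2]
  ring
end

section
/- If Q is ε-geographic differentially private with respect to metric d on U, then for any u1, u2 ∈ U, the KL divergence satisfies D_KL(Q(u1) ‖ Q(u2)) ≤ ε·d(u1,u2)·(e^{ε·d(u1,u2)} − 1). -/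
open MeasureTheory ENNReal Real

private lemma geoDP_pointwise (c x : ℝ) (hc : 0 ≤ c) (h1 : Real.exp (-c) ≤ x)
    (h2 : x ≤ Real.exp c) :
    (x - 1) * Real.log x ≤ c * (Real.exp c - 1) := by
  have hx : 0 < x := lt_of_lt_of_le (Real.exp_pos _) h1
  have hlogle : Real.log x ≤ c := by
    calc Real.log x ≤ Real.log (Real.exp c) := Real.log_le_log hx h2
    _ = c := Real.log_exp c
  have hlogge : -c ≤ Real.log x := by
    calc -c = Real.log (Real.exp (-c)) := (Real.log_exp _).symm
    _ ≤ Real.log x := Real.log_le_log (Real.exp_pos _) h1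
  have h1e : 1 - x ≤ Real.exp c - 1 := by
    have hprod : Real.exp c * Real.exp (-c) = 1 := by
      rw [← Real.exp_add]; simp
    have hpc : 0 < Real.exp c := Real.exp_pos c
    nlinarith [sq_nonneg (Real.exp c - 1), hpc, h1]
  have habs : |x - 1| ≤ Real.exp c - 1 := abs_le.2 ⟨by linarith, by linarith⟩
  have habs2 : |Real.log x| ≤ c := abs_le.2 ⟨hlogge, hlogle⟩
  calc (x - 1) * Real.log x ≤ |(x - 1) * Real.log x| := le_abs_self _
  _ = |x - 1| * |Real.log x| := abs_mul _ _
  _ ≤ (Real.exp c - 1) * c :=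
      mul_le_mul habs habs2 (abs_nonneg _) (by nlinarith [Real.one_le_exp hc])
  _ = c * (Real.exp c - 1) := mul_comm _ _

/-- `Q` is `ε`-geographic differentially private w.r.t. the metric on `U`. -/
def GeoDP {U : Type*} [MetricSpace U] {Y : Type*} [MeasurableSpace Y]
    (Q : U → Measure Y) (ε : ℝ) : Prop :=
  ∀ S : Set Y, MeasurableSet S → ∀ u₁ u₂ : U,
    Q u₁ S ≤ ENNReal.ofReal (Real.exp (ε * dist u₁ u₂)) * Q u₂ S

/-- Under `ε`-geographic DP, with the Radon–Nikodym derivative `r` of `Q u₁`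
w.r.t. `Q u₂` bounded between `e^{-ε d}` and `e^{ε d}`, the KL divergence
`D_KL(Q u₁ ‖ Q u₂) = ∫ log r d(Q u₁)` is at most `ε d (e^{ε d} - 1)`. -/
theorem geoDP_kl_bound
    {U : Type*} [MetricSpace U] {Y : Type*} [MeasurableSpace Y]
    (Q : U → Measure Y) [∀ u, IsProbabilityMeasure (Q u)]
    (ε : ℝ) (hε : 0 ≤ ε) (hQ : GeoDP Q ε)
    (u₁ u₂ : U) (r : Y → ℝ) (hr : Measurable r)
    (hRN : Q u₁ = (Q u₂).withDensity (fun y => ENNReal.ofReal (r y)))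
    (hlb : ∀ y, Real.exp (-(ε * dist u₁ u₂)) ≤ r y)
    (hub : ∀ y, r y ≤ Real.exp (ε * dist u₁ u₂)) :
    ∫ y, Real.log (r y) ∂(Q u₁)
      ≤ ε * dist u₁ u₂ * (Real.exp (ε * dist u₁ u₂) - 1) := by
  set c := ε * dist u₁ u₂ with hcdef
  have hc : 0 ≤ c := mul_nonneg hε dist_nonneg
  have hrpos : ∀ y, 0 < r y := fun y => lt_of_lt_of_le (Real.exp_pos _) (hlb y)
  have hr0 : ∀ y, 0 ≤ r y := fun y => (hrpos y).le
  have hlogle : ∀ y, Real.log (r y) ≤ c := fun y => by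
    calc Real.log (r y) ≤ Real.log (Real.exp c) := Real.log_le_log (hrpos y) (hub y)
    _ = c := Real.log_exp c
  have hlogge : ∀ y, -c ≤ Real.log (r y) := fun y => by
    calc -c = Real.log (Real.exp (-c)) := (Real.log_exp _).symm
    _ ≤ Real.log (r y) := Real.log_le_log (Real.exp_pos _) (hlb y)
  have hmlog : Measurable fun y => Real.log (r y) := Real.measurable_log.comp hr
  -- integrability facts
  have hint_r : Integrable r (Q u₂) :=
    ⟨hr.aestronglyMeasurable, HasFiniteIntegral.of_bounded (C := Real.exp c)
      (ae_of_all _ fun y => by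
        rw [Real.norm_eq_abs, abs_of_nonneg (hr0 y)]; exact hub y)⟩
  have hint_log : Integrable (fun y => Real.log (r y)) (Q u₂) :=
    ⟨hmlog.aestronglyMeasurable, HasFiniteIntegral.of_bounded (C := c)
      (ae_of_all _ fun y => by
        rw [Real.norm_eq_abs, abs_le]; exact ⟨hlogge y, hlogle y⟩)⟩
  have hint_mul : Integrable (fun y => (r y - 1) * Real.log (r y)) (Q u₂) :=
    ⟨((hr.sub measurable_const).mul hmlog).aestronglyMeasurable,
      HasFiniteIntegral.of_bounded (C := (Real.exp c + 1) * c)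
      (ae_of_all _ fun y => by
        rw [Real.norm_eq_abs, abs_mul]
        have h1 : |r y - 1| ≤ Real.exp c + 1 := by
          rw [abs_le]
          constructor
          · nlinarith [hrpos y, Real.exp_pos c]
          · nlinarith [hub y]
        have h2 : |Real.log (r y)| ≤ c := abs_le.2 ⟨hlogge y, hlogle y⟩
        exact mul_le_mul h1 h2 (abs_nonneg _) (by positivity))⟩
  -- ∫ r ∂(Q u₂) = 1
  have hintr1 : ∫ y, r y ∂(Q u₂) = 1 := by
    have h1 : (Q u₁) Set.univ = 1 := measure_univ
    rw [hRN] at h1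
    rw [withDensity_apply _ MeasurableSet.univ, Measure.restrict_univ] at h1
    have heq : ∫ y, r y ∂(Q u₂)
        = (∫⁻ y, ENNReal.ofReal (r y) ∂(Q u₂)).toReal := by
      rw [integral_eq_lintegral_of_nonneg_ae (ae_of_all _ hr0) hr.aestronglyMeasurable]
    rw [heq, h1, ENNReal.toReal_one]
  -- rewrite the LHS integral
  have hkey : ∫ y, Real.log (r y) ∂(Q u₁)
      = ∫ y, r y * Real.log (r y) ∂(Q u₂) := by
    have hmeas : Measurable fun y => (r y).toNNReal := hr.real_toNNReal
    have : (fun y => ENNReal.ofReal (r y))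
        = fun y => ((r y).toNNReal : ℝ≥0∞) := rfl
    rw [hRN, this, integral_withDensity_eq_integral_smul hmeas]
    congr 1
    funext y
    rw [NNReal.smul_def, smul_eq_mul, Real.coe_toNNReal _ (hr0 y)]
  rw [hkey]
  -- ∫ log r ∂(Q u₂) ≤ 0
  have hlog_nonpos : ∫ y, Real.log (r y) ∂(Q u₂) ≤ 0 := by
    have hle : ∫ y, Real.log (r y) ∂(Q u₂) ≤ ∫ y, (r y - 1) ∂(Q u₂) := by
      apply integral_mono hint_log (hint_r.sub (integrable_const 1))
      intro y
      exact Real.log_le_sub_one_of_pos (hrpos y)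
    rw [integral_sub hint_r (integrable_const 1), hintr1] at hle
    simpa using hle
  have hsplit : ∫ y, r y * Real.log (r y) ∂(Q u₂)
      = (∫ y, (r y - 1) * Real.log (r y) ∂(Q u₂)) + ∫ y, Real.log (r y) ∂(Q u₂) := by
    rw [← integral_add hint_mul hint_log]
    congr 1
    funext y
    ring
  rw [hsplit]
  have hbound : ∫ y, (r y - 1) * Real.log (r y) ∂(Q u₂) ≤ c * (Real.exp c - 1) := by
    calc ∫ y, (r y - 1) * Real.log (r y) ∂(Q u₂)
        ≤ ∫ _y, c * (Real.exp c - 1) ∂(Q u₂) := by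
          apply integral_mono hint_mul (integrable_const _)
          intro y
          exact geoDP_pointwise c (r y) hc (hlb y) (hub y)
      _ = c * (Real.exp c - 1) := by simp
  linarith
end

section
/- Let u : 2^B → ℝ be a monotone nondecreasing submodular set function with u(∅) = 0 on a finite ground set B. The greedy algorithm that, for k steps, adds the element with maximal marginal gain, produces a set G_k with u(G_k) ≥ (1 − (1 − 1/k)^k) · max_{|S| ≤ k} u(S) ≥ (1 − 1/e) · max_{|S| ≤ k} u(S). -/
open Real Finset

/-!
Let `S` be a set with `|S| ≤ k` and `A` the current greedy set. Submodularity bounds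
`u S - u A ≤ u (A ∪ S) - u A` by the sum of the marginal gains of the elements of `S` over `A`,
each at most the greedy gain `δ`; hence `δ ≥ (u S - u A) / k`, i.e. every greedy step shrinks
the gap `u S - u A` by a factor `1 - 1/k`. After `k` steps the gap is at most `(1 - 1/k)^k u S`, and
`(1 - 1/k)^k ≤ e⁻¹` because `1 - t ≤ e^{-t}`.
-/

section Greedy

variable {B : Type*} [DecidableEq B] {u : Finset B → ℝ}

theorem sub_le_sum_marginal_gain
    (hsub : ∀ S T : Finset B, S ⊆ T → ∀ x : B, x ∉ T →
      u (insert x T) - u T ≤ u (insert x S) - u S)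
    (A D : Finset B) : u (A ∪ D) - u A ≤ ∑ x ∈ D, (u (insert x A) - u A) := by
  induction D using Finset.induction with
  | empty => simp
  | insert x D hxD ih =>
    rw [sum_insert hxD, union_insert]
    by_cases hxA : x ∈ A
    · rw [insert_eq_of_mem (mem_union_left D hxA), insert_eq_of_mem hxA]
      linarith
    · have := hsub A (A ∪ D) subset_union_left x (by simp [hxA, hxD])
      linarith

theorem sub_le_card_mul_greedy_gain (hmono : Monotone u)
    (hsub : ∀ S T : Finset B, S ⊆ T → ∀ x : B, x ∉ T →
      u (insert x T) - u T ≤ u (insert x S) - u S)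
    {A : Finset B} {x : B} (hx : ∀ y : B, u (insert y A) ≤ u (insert x A)) (S : Finset B) :
    u S - u A ≤ S.card * (u (insert x A) - u A) :=
  calc u S - u A ≤ u (A ∪ S) - u A := by gcongr; exact hmono subset_union_right
    _ ≤ ∑ y ∈ S, (u (insert y A) - u A) := sub_le_sum_marginal_gain hsub A S
    _ ≤ S.card * (u (insert x A) - u A) := by
      simpa using sum_le_card_nsmul S _ _ fun y _ => sub_le_sub_right (hx y) _

/-- Also valid for `k = 0`: then `S = ∅`, and `1 / 0 = 0` in `ℝ`. -/
theorem greedy_gap_le_one_sub_one_div_mul (hmono : Monotone u)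
    (hsub : ∀ S T : Finset B, S ⊆ T → ∀ x : B, x ∉ T →
      u (insert x T) - u T ≤ u (insert x S) - u S)
    {A : Finset B} {x : B} (hx : ∀ y : B, u (insert y A) ≤ u (insert x A))
    {S : Finset B} {k : ℕ} (hS : S.card ≤ k) :
    u S - u (insert x A) ≤ (1 - 1 / k) * (u S - u A) := by
  have hgain : 0 ≤ u (insert x A) - u A := sub_nonneg.2 (hmono (subset_insert x A))
  have hgap : u S - u A ≤ (u (insert x A) - u A) * k :=
    calc u S - u A ≤ S.card * (u (insert x A) - u A) :=
          sub_le_card_mul_greedy_gain hmono hsub hx S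
      _ ≤ (u (insert x A) - u A) * k := by rw [mul_comm]; gcongr
  have := div_le_of_le_mul₀ k.cast_nonneg hgain hgap
  rw [sub_mul, one_mul, one_div_mul_eq_div]
  linarith

end Greedy

theorem greedy_submodular_approximation_general
    {B : Type*} [DecidableEq B]
    (u : Finset B → ℝ)
    (hmono : ∀ S T : Finset B, S ⊆ T → u S ≤ u T)
    (hsub : ∀ S T : Finset B, S ⊆ T → ∀ x : B, x ∉ T →
      u (insert x T) - u T ≤ u (insert x S) - u S)
    (hempty : u ∅ = 0)
    (k : ℕ)
    (G : ℕ → Finset B) (hG0 : G 0 = ∅)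
    (hGreedy : ∀ i : ℕ, ∃ x : B, G (i + 1) = insert x (G i) ∧
      ∀ y : B, u (insert y (G i)) ≤ u (insert x (G i))) :
    ∀ S : Finset B, S.card ≤ k →
      (1 - (1 - 1 / (k : ℝ)) ^ k) * u S ≤ u (G k) ∧
      (1 - Real.exp (-1)) * u S ≤ (1 - (1 - 1 / (k : ℝ)) ^ k) * u S := by
  intro S hS
  have hmono' : Monotone u := fun S T h => hmono S T h
  have hgap : u S - u (G k) ≤ (1 - 1 / (k : ℝ)) ^ k * u S := by
    have := le_geom (u := fun i => u S - u (G i)) (Nat.one_sub_one_div_cast_nonneg k) k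
      fun i _ => by
        obtain ⟨x, hGx, hx⟩ := hGreedy i
        simpa only [hGx] using greedy_gap_le_one_sub_one_div_mul hmono' hsub hx hS
    simpa [hG0, hempty] using this
  refine ⟨by linarith [sub_mul 1 ((1 - 1 / (k : ℝ)) ^ k) (u S)], ?_⟩
  rcases Nat.eq_zero_or_pos k with rfl | hk
  · simp [card_eq_zero.1 (Nat.le_zero.1 hS), hempty]
  · have hS0 : 0 ≤ u S := hempty ▸ hmono' (empty_subset S)
    gcongr
    simpa using one_sub_div_pow_le_exp_neg (t := 1) (n := k) (by exact_mod_cast hk)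

/-- Greedy maximization of a monotone submodular function: after `k` greedy
steps, the value is at least `(1 - (1 - 1/k)^k) ≥ (1 - 1/e)` times the optimum
over sets of size at most `k`. -/
theorem greedy_submodular_approximation
    {B : Type*} [DecidableEq B] [Fintype B]
    (u : Finset B → ℝ)
    (hmono : ∀ S T : Finset B, S ⊆ T → u S ≤ u T)
    (hsub : ∀ S T : Finset B, S ⊆ T → ∀ x : B, x ∉ T →
      u (insert x T) - u T ≤ u (insert x S) - u S)
    (hempty : u ∅ = 0)
    (k : ℕ) (hk : 0 < k)
    (G : ℕ → Finset B) (hG0 : G 0 = ∅)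
    (hGreedy : ∀ i : ℕ, ∃ x : B, G (i + 1) = insert x (G i) ∧
      ∀ y : B, u (insert y (G i)) ≤ u (insert x (G i))) :
    ∀ S : Finset B, S.card ≤ k →
      (1 - (1 - 1 / (k : ℝ)) ^ k) * u S ≤ u (G k) ∧
      (1 - Real.exp (-1)) * u S ≤ (1 - (1 - 1 / (k : ℝ)) ^ k) * u S :=
  greedy_submodular_approximation_general u hmono hsub hempty k G hG0 hGreedy
end
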